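/- arXiv:2011.05467 — 3 statements merged into one kernel-verified Lean document; each statement's English description precedes it below -/
import Mathlib

section
/- Let 0 < ε < 1/2, 0 < β < 1/4 − ε/2 and μ₀ > 0. Let (E, s) be a k-uniform hypergraph structure on [n] and suppose the direct sum lifting dsum : F₂ⁿ → F₂^E is a (1/2+2μ₀, 2ε)-parity sampler. Let C₁ ⊆ F₂ⁿ be nonempty, C_k = dsum(C₁), and let ỹ ∈ F₂^E satisfy Δ(ỹ, C_k) < 1/4 − ε/2 − β; let z* ∈ C₁ be such that y* = dsum(z*) attains the minimum of Δ(·, ỹ) over C_k. For z' ∈ F₂ⁿ define SAT(z') := Pr_{e∈E}[ Σ_{i∈s(e)} z'_i = ỹ_e mod 2 ] (e uniform), and OPT := max_{z'∈F₂ⁿ} SAT(z'). If z ∈ F₂ⁿ satisfies SAT(z) ≥ OPT − β, then either Δ(z*, z) ≤ 1/4 − μ₀ or Δ(z*, z̄) ≤ 1/4 − μ₀, where z̄ is the coordinatewise complement of z. -/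
open Finset

/-- Relative Hamming distance between two words (uniform measure on coordinates). -/
noncomputable def relHam {m : Type*} [Fintype m] {α : Type*} [DecidableEq α]
    (x y : m → α) : ℝ :=
  ((Finset.univ.filter fun j => x j ≠ y j).card : ℝ) / (Fintype.card m : ℝ)

/-- The bias of a word over `F₂`: `|E_j (−1)^{z_j}|`. -/
noncomputable def bias2 {m : Type*} [Fintype m] (z : m → ZMod 2) : ℝ :=
  |∑ j, (-1 : ℝ) ^ (z j).val| / (Fintype.card m : ℝ)

/-- The direct sum lifting `(dsum z)_e = Σ_{i ∈ s e} z_i (mod 2)`. -/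
def dsumLift {n : ℕ} {E : Type*} (s : E → Finset (Fin n))
    (z : Fin n → ZMod 2) (e : E) : ZMod 2 :=
  ∑ i ∈ s e, z i

/-- The fraction of the `k`-XOR constraints `Σ_{i∈s(e)} z_i = ỹ_e` satisfied by `z`. -/
noncomputable def satFrac {n : ℕ} {E : Type*} [Fintype E] (s : E → Finset (Fin n))
    (yt : E → ZMod 2) (z : Fin n → ZMod 2) : ℝ :=
  ((Finset.univ.filter fun e => dsumLift s z e = yt e).card : ℝ) / (Fintype.card E : ℝ)

/-! Since `SAT(z) ≥ SAT(z*) − β`, both `dsum z` and `dsum z*` lie within `Δ(dsum z*, ỹ) + β` of `ỹ`,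
so they are at distance `< 1/2 − ε` from each other. By linearity `dsum (z* + z) = dsum z* + dsum z`
therefore has bias `> 2ε`, and the parity sampling property, read contrapositively, forces
`bias (z* + z) > 1/2 + 2μ₀`: the word `z` agrees with `z*` or with `z̄` on more than a
`3/4 + μ₀` fraction of the coordinates. -/

section RelHam

variable {m : Type*} [Fintype m] {α : Type*} [DecidableEq α]

lemma relHam_eq_hammingDist (x y : m → α) :
    relHam x y = hammingDist x y / Fintype.card m :=
  rfl

lemma relHam_triangle_right (x y z : m → α) : relHam x y ≤ relHam x z + relHam y z := by
  simp only [relHam_eq_hammingDist, ← add_div]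
  gcongr
  exact_mod_cast hammingDist_triangle_right x y z

lemma card_filter_eq_div_card [Nonempty m] (x y : m → α) :
    (#{j | x j = y j} : ℝ) / Fintype.card m = 1 - relHam x y := by
  have hcard : #{j | x j = y j} + hammingDist x y = Fintype.card m :=
    Finset.card_filter_add_card_filter_not _
  have hpos : (Fintype.card m : ℝ) ≠ 0 := by positivity
  rw [relHam_eq_hammingDist, eq_sub_iff_add_eq, ← add_div, div_eq_one_iff_eq hpos]
  exact_mod_cast hcard

end RelHam

section ZModTwo

variable {m : Type*} [Fintype m]

lemma neg_one_pow_val_add (a b : ZMod 2) :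
    (-1 : ℝ) ^ (a + b).val = 1 - 2 * if a ≠ b then 1 else 0 := by
  have hval : (a + b).val = if a ≠ b then 1 else 0 := by revert a b; decide
  rw [hval]
  split_ifs <;> norm_num

lemma bias2_add [Nonempty m] (u v : m → ZMod 2) : bias2 (u + v) = |1 - 2 * relHam u v| := by
  have hsum : ∑ j, (-1 : ℝ) ^ (u j + v j).val = Fintype.card m - 2 * hammingDist u v := by
    simp only [neg_one_pow_val_add, Finset.sum_sub_distrib, ← Finset.mul_sum, Finset.sum_boole]
    simp [hammingDist]
  have hcard : (0 : ℝ) < Fintype.card m := by exact_mod_cast Fintype.card_pos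
  simp only [bias2, Pi.add_apply, hsum, relHam_eq_hammingDist]
  rw [mul_div_assoc', one_sub_div hcard.ne', abs_div, abs_of_pos hcard]

lemma lt_bias2_add_of_relHam_lt [Nonempty m] {u v : m → ZMod 2} {δ : ℝ} (h : relHam u v < δ) :
    1 - 2 * δ < bias2 (u + v) := by
  rw [bias2_add]
  exact lt_of_lt_of_le (by linarith) (le_abs_self _)

lemma relHam_add_one [Nonempty m] (u v : m → ZMod 2) :
    relHam u (fun j => v j + 1) = 1 - relHam u v := by
  have hflip : ∀ a b : ZMod 2, a ≠ b + 1 ↔ a = b := by decide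
  rw [← card_filter_eq_div_card, relHam]
  simp only [hflip]

lemma relHam_lt_or_relHam_add_one_lt_of_lt_bias2_add [Nonempty m] {u v : m → ZMod 2} {δ : ℝ}
    (h : 1 - 2 * δ < bias2 (u + v)) :
    relHam u v < δ ∨ relHam u (fun j => v j + 1) < δ := by
  rw [bias2_add] at h
  rw [relHam_add_one]
  rcases lt_abs.mp h with h | h
  · left; linarith
  · right; linarith

end ZModTwo

section DirectSum

variable {n : ℕ} {E : Type*}

lemma dsumLift_add (s : E → Finset (Fin n)) (u v : Fin n → ZMod 2) :
    dsumLift s (u + v) = dsumLift s u + dsumLift s v :=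
  funext fun _ => Finset.sum_add_distrib

lemma satFrac_eq_one_sub_relHam [Fintype E] [Nonempty E] (s : E → Finset (Fin n))
    (yt : E → ZMod 2) (z : Fin n → ZMod 2) :
    satFrac s yt z = 1 - relHam (dsumLift s z) yt :=
  card_filter_eq_div_card _ _

end DirectSum

theorem stmt_3_general (n : ℕ) (hn : 0 < n)
    (ε β μ₀ : ℝ) (hβ0 : 0 < β)
    (E : Type) [Fintype E] [Nonempty E]
    (s : E → Finset (Fin n))
    (hps : ∀ z : Fin n → ZMod 2, bias2 z ≤ 1/2 + 2*μ₀ → bias2 (dsumLift s z) ≤ 2*ε)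
    (yt : E → ZMod 2)
    (zstar : Fin n → ZMod 2)
    (hclose : relHam (dsumLift s zstar) yt < 1/4 - ε/2 - β)
    (z : Fin n → ZMod 2)
    (hsat : ∀ z' : Fin n → ZMod 2, satFrac s yt z' - β ≤ satFrac s yt z) :
    relHam zstar z ≤ 1/4 - μ₀ ∨ relHam zstar (fun i => z i + 1) ≤ 1/4 - μ₀ := by
  have : Nonempty (Fin n) := ⟨⟨0, hn⟩⟩
  have hz : relHam (dsumLift s z) yt ≤ relHam (dsumLift s zstar) yt + β := by
    have h := hsat zstar
    rw [satFrac_eq_one_sub_relHam, satFrac_eq_one_sub_relHam] at h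
    linarith
  have hlifts : relHam (dsumLift s zstar) (dsumLift s z) < 1/2 - ε :=
    (relHam_triangle_right _ _ yt).trans_lt (by linarith)
  have hbias_lift : 2 * ε < bias2 (dsumLift s (zstar + z)) := by
    rw [dsumLift_add]
    convert lt_bias2_add_of_relHam_lt hlifts using 1
    ring
  have hbias : 1 - 2 * (1/4 - μ₀) < bias2 (zstar + z) :=
    lt_of_not_ge fun h => (hps _ (by linarith)).not_gt hbias_lift
  exact (relHam_lt_or_relHam_add_one_lt_of_lt_bias2_add hbias).imp le_of_lt le_of_lt

/-- **Unique decoding from approximate CSP solutions.** Under the assumptions of the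
unique decoding lemma, any `z` satisfying `SAT(z) ≥ OPT − β` for the `k`-XOR instance
determined by `ỹ` has `z` or its complement within distance `1/4 − μ₀` of `z*`. -/
theorem stmt_3 (n k : ℕ) (hn : 0 < n)
    (ε β μ₀ : ℝ) (hε0 : 0 < ε) (hε : ε < 1/2) (hβ0 : 0 < β) (hβ : β < 1/4 - ε/2)
    (hμ₀ : 0 < μ₀)
    (E : Type) [Fintype E] [Nonempty E]
    (s : E → Finset (Fin n)) (hs : ∀ e, (s e).card = k)
    (hps : ∀ z : Fin n → ZMod 2, bias2 z ≤ 1/2 + 2*μ₀ → bias2 (dsumLift s z) ≤ 2*ε)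
    (C₁ : Set (Fin n → ZMod 2)) (hC₁ : C₁.Nonempty)
    (yt : E → ZMod 2)
    (zstar : Fin n → ZMod 2) (hzstar : zstar ∈ C₁)
    (hmin : ∀ y ∈ (dsumLift s) '' C₁, relHam (dsumLift s zstar) yt ≤ relHam y yt)
    (hclose : relHam (dsumLift s zstar) yt < 1/4 - ε/2 - β)
    (z : Fin n → ZMod 2)
    (hsat : ∀ z' : Fin n → ZMod 2, satFrac s yt z' - β ≤ satFrac s yt z) :
    relHam zstar z ≤ 1/4 - μ₀ ∨ relHam zstar (fun i => z i + 1) ≤ 1/4 - μ₀ :=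
  stmt_3_general n hn ε β μ₀ hβ0 E s hps yt zstar hclose z hsat
end

section
/- Let C₁ ⊆ F₂ⁿ be a code with pairwise relative distance at least δ (Δ(z,z') ≥ δ for all distinct z, z' ∈ C₁), where δ > 0 and δ·n ≥ 4. Let s = ⌊δn/2⌋ and let φ : F₂ⁿ → F₂ⁿ be the linear projection that sets the last s coordinates to 0 and leaves the first n − s coordinates unchanged. Then the code C₁' = φ(C₁) satisfies: (i) |C₁'| = |C₁| (φ is injective on C₁); (ii) Δ(z,z') ≥ δ/2 for all distinct z, z' ∈ C₁'; and (iii) bias(z − z') ≤ 1 − δ/2 for all distinct z, z' ∈ C₁', where bias(w) := |E_{i∈[n]} (−1)^{w_i}|. -/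
open Finset

/-- The linear projection that zeroes out the last `s` coordinates. -/
def zeroPad (n s : ℕ) (z : Fin n → ZMod 2) (i : Fin n) : ZMod 2 :=
  if (i : ℕ) < n - s then z i else 0

/-!
Zeroing the last `s = ⌊δn/2⌋` coordinates lowers a Hamming distance by at most `s`, so distinct
codewords stay at distance at least `δn/2 > 0`. Two distinct padded words agree on the zeroed
block, so their distance is at most `n - s ≤ n - δn/4`, where `δn ≥ 4` absorbs the rounding of
the floor. As `bias(z - z') = |1 - 2Δ(z, z')|`, a distance in `[δn/4, n - δn/4]` gives bias at
most `1 - δ/2`.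
-/

section HammingBias

variable {m : Type*} [Fintype m]

theorem relHam_eq_hammingDist_div {α : Type*} [DecidableEq α] (x y : m → α) :
    relHam x y = hammingDist x y / Fintype.card m :=
  rfl

theorem neg_one_pow_val_eq_one_sub_two_mul (a : ZMod 2) :
    (-1 : ℝ) ^ a.val = 1 - 2 * if a ≠ 0 then 1 else 0 := by
  rcases (by decide : ∀ b : ZMod 2, b = 0 ∨ b = 1) a with rfl | rfl <;> norm_num [ZMod.val_one]

theorem sum_neg_one_pow_val_eq (w : m → ZMod 2) :
    ∑ j, (-1 : ℝ) ^ (w j).val = Fintype.card m - 2 * hammingNorm w := by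
  simp only [neg_one_pow_val_eq_one_sub_two_mul, sum_sub_distrib, ← mul_sum, hammingNorm,
    natCast_card_filter, sum_const, card_univ, nsmul_eq_mul, mul_one]

theorem bias2_sub_eq (x y : m → ZMod 2) :
    bias2 (x - y) = |(Fintype.card m : ℝ) - 2 * hammingDist x y| / Fintype.card m := by
  have hnorm : hammingNorm (x - y) = hammingDist x y := by
    simp only [hammingNorm, hammingDist, Pi.sub_apply, ne_eq, sub_eq_zero]
  rw [bias2, sum_neg_one_pow_val_eq, hnorm]

theorem bias2_sub_le {x y : m → ZMod 2} {r : ℝ} (hlo : r ≤ hammingDist x y)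
    (hhi : (hammingDist x y : ℝ) ≤ Fintype.card m - r) :
    bias2 (x - y) ≤ 1 - 2 * r / Fintype.card m := by
  rw [bias2_sub_eq]
  rcases (Fintype.card m).eq_zero_or_pos with hm | hm
  · simp only [hm, Nat.cast_zero, div_zero, sub_zero, zero_le_one]
  · have hm' : (0 : ℝ) < Fintype.card m := by exact_mod_cast hm
    rw [div_le_iff₀ hm', sub_mul, div_mul_cancel₀ _ hm'.ne', abs_le]
    constructor <;> linarith

end HammingBias

section ZeroPad

variable {n : ℕ}

theorem hammingDist_zeroPad_le (s : ℕ) (x y : Fin n → ZMod 2) :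
    hammingDist (zeroPad n s x) (zeroPad n s y) ≤ n - s := by
  calc hammingDist (zeroPad n s x) (zeroPad n s y)
      ≤ #{i : Fin n | (i : ℕ) < n - s} := by
        refine card_le_card fun i hi => ?_
        simp only [mem_filter, mem_univ, true_and] at hi ⊢
        by_contra h
        simp [zeroPad, h] at hi
    _ ≤ n - s := by rw [Fin.card_filter_val_lt]; exact min_le_right _ _

theorem hammingDist_le_hammingDist_zeroPad_add (s : ℕ) (x y : Fin n → ZMod 2) :
    hammingDist x y ≤ hammingDist (zeroPad n s x) (zeroPad n s y) + s := by
  have hsub : univ.filter (fun i => x i ≠ y i) ⊆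
      univ.filter (fun i => zeroPad n s x i ≠ zeroPad n s y i) ∪
        univ.filter fun i : Fin n => ¬ (i : ℕ) < n - s := by
    intro i hi
    simp only [mem_filter, mem_univ, true_and, mem_union] at hi ⊢
    by_cases h : (i : ℕ) < n - s
    · simp [zeroPad, h, hi]
    · exact Or.inr h
  have hhigh : #{i : Fin n | ¬ (i : ℕ) < n - s} ≤ s := by
    have := card_filter_add_card_filter_not (s := (univ : Finset (Fin n)))
      (fun i : Fin n => (i : ℕ) < n - s)
    rw [Fin.card_filter_val_lt, card_univ, Fintype.card_fin] at this
    omega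
  calc hammingDist x y ≤ _ := card_le_card hsub
    _ ≤ _ := card_union_le _ _
    _ ≤ _ := Nat.add_le_add_left hhigh _

theorem hammingDist_zeroPad_add_le {s : ℕ} {x y : Fin n → ZMod 2}
    (h : zeroPad n s x ≠ zeroPad n s y) :
    hammingDist (zeroPad n s x) (zeroPad n s y) + s ≤ n := by
  have := hammingDist_zeroPad_le s x y
  have := hammingDist_pos.mpr h
  omega

theorem half_le_hammingDist_zeroPad_floor {d : ℝ} (hd : 0 ≤ d) {x y : Fin n → ZMod 2}
    (h : d ≤ hammingDist x y) :
    d / 2 ≤ hammingDist (zeroPad n ⌊d / 2⌋₊ x) (zeroPad n ⌊d / 2⌋₊ y) := by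
  have hfloor : (⌊d / 2⌋₊ : ℝ) ≤ d / 2 := Nat.floor_le (by linarith)
  have : (hammingDist x y : ℝ) ≤ hammingDist (zeroPad n ⌊d / 2⌋₊ x) (zeroPad n ⌊d / 2⌋₊ y)
      + ⌊d / 2⌋₊ := by
    exact_mod_cast hammingDist_le_hammingDist_zeroPad_add _ x y
  linarith

end ZeroPad

theorem stmt_10_general (n : ℕ) (δ : ℝ) (hδn : 4 ≤ δ * n)
    (C₁ : Set (Fin n → ZMod 2))
    (hdist : ∀ z ∈ C₁, ∀ z' ∈ C₁, z ≠ z' → δ ≤ relHam z z') :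
    Set.InjOn (zeroPad n ⌊δ * n / 2⌋₊) C₁
    ∧ (∀ z ∈ zeroPad n ⌊δ * n / 2⌋₊ '' C₁, ∀ z' ∈ zeroPad n ⌊δ * n / 2⌋₊ '' C₁,
        z ≠ z' → δ / 2 ≤ relHam z z')
    ∧ (∀ z ∈ zeroPad n ⌊δ * n / 2⌋₊ '' C₁, ∀ z' ∈ zeroPad n ⌊δ * n / 2⌋₊ '' C₁,
        z ≠ z' → bias2 (z - z') ≤ 1 - δ / 2) := by
  set s := ⌊δ * n / 2⌋₊
  have hn : (0 : ℝ) < n := by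
    rcases Nat.eq_zero_or_pos n with h | h
    · simp [h] at hδn; linarith
    · exact_mod_cast h
  have hpad : ∀ z ∈ C₁, ∀ z' ∈ C₁, z ≠ z' →
      δ * n / 2 ≤ hammingDist (zeroPad n s z) (zeroPad n s z') := fun z hz z' hz' hne => by
    have hd := hdist z hz z' hz' hne
    rw [relHam_eq_hammingDist_div, Fintype.card_fin, le_div_iff₀ hn] at hd
    exact half_le_hammingDist_zeroPad_floor (by linarith) hd
  have hpad_ne : ∀ z ∈ C₁, ∀ z' ∈ C₁, z ≠ z' → zeroPad n s z ≠ zeroPad n s z' :=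
    fun z hz z' hz' hne heq => by
      have := hpad z hz z' hz' hne
      rw [heq, hammingDist_self, Nat.cast_zero] at this
      linarith
  refine ⟨fun z hz z' hz' heq => not_not.mp fun hne => hpad_ne z hz z' hz' hne heq, ?_, ?_⟩
  · rintro _ ⟨z, hz, rfl⟩ _ ⟨z', hz', rfl⟩ hne
    rw [relHam_eq_hammingDist_div, Fintype.card_fin, le_div_iff₀ hn]
    linarith [hpad z hz z' hz' (ne_of_apply_ne _ hne)]
  · rintro _ ⟨z, hz, rfl⟩ _ ⟨z', hz', rfl⟩ hne
    have hfloor : δ * n / 2 - 1 < s := by linarith [Nat.lt_floor_add_one (δ * n / 2)]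
    have hhi : (hammingDist (zeroPad n s z) (zeroPad n s z') : ℝ) + s ≤ n := by
      exact_mod_cast hammingDist_zeroPad_add_le hne
    have hlo := hpad z hz z' hz' (ne_of_apply_ne _ hne)
    calc bias2 _ ≤ 1 - 2 * (δ * n / 4) / Fintype.card (Fin n) :=
          bias2_sub_le (by linarith) (by rw [Fintype.card_fin]; linarith)
      _ = 1 - δ / 2 := by rw [Fintype.card_fin]; field_simp; ring

/-- **Zero padding.** If `C₁ ⊆ F₂ⁿ` has pairwise relative distance at least `δ > 0` with
`δ·n ≥ 4`, and `φ` zeroes the last `⌊δn/2⌋` coordinates, then `φ` is injective on `C₁`,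
the image code has pairwise distance at least `δ/2`, and the difference of any two
distinct codewords of the image has bias at most `1 − δ/2`. -/
theorem stmt_10 (n : ℕ) (δ : ℝ) (hδ : 0 < δ) (hδn : 4 ≤ δ * n)
    (C₁ : Set (Fin n → ZMod 2))
    (hdist : ∀ z ∈ C₁, ∀ z' ∈ C₁, z ≠ z' → δ ≤ relHam z z') :
    Set.InjOn (zeroPad n ⌊δ * n / 2⌋₊) C₁
    ∧ (∀ z ∈ zeroPad n ⌊δ * n / 2⌋₊ '' C₁, ∀ z' ∈ zeroPad n ⌊δ * n / 2⌋₊ '' C₁,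
        z ≠ z' → δ / 2 ≤ relHam z z')
    ∧ (∀ z ∈ zeroPad n ⌊δ * n / 2⌋₊ '' C₁, ∀ z' ∈ zeroPad n ⌊δ * n / 2⌋₊ '' C₁,
        z ≠ z' → bias2 (z - z') ≤ 1 - δ / 2) :=
  stmt_10_general n δ hδn C₁ hdist
end

section
/- Let G be a d-regular simple graph on a nonempty finite vertex set V with d ≥ 1, let A be its normalized adjacency matrix (A(u,v) = 1/d if u and v are adjacent, else 0), and let λ ≥ 0 be such that for every v : V → ℝ with Σ_{a∈V} v(a) = 0 one has ‖A v‖₂ ≤ λ·‖v‖₂ (the second largest singular value of G is at most λ). Let k ≥ 1 and let W_G(k) be the set of walks on k vertices with the uniform measure. Then for every z ∈ F₂^V with |E_{a∈V} (−1)^{z_a}| ≤ β₀ (uniform average over V), the parity along a random walk satisfies |E_{w∈W_G(k)} (−1)^{z_{w₁} + z_{w₂} + ⋯ + z_{w_k}}| ≤ (β₀ + 2λ)^{⌊k/2⌋}. That is, the direct sum lifting over length-(k−1) walks of G is a (β₀, (β₀+2λ)^{⌊k/2⌋})-parity sampler. -/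
/-!
Write the parity bias as `⟪D u, (A D)^(k-1) u⟫`, where `A` is the normalized adjacency operator
on `ℓ²(V)`, `D` the diagonal operator of the signs `(-1)^(z a)` and `u` the normalized all-ones
vector. Splitting a vector along `u` and `u^⊥` gives `‖A x‖ ≤ |⟪u, x⟫| + λ‖x‖`. For `x = D A y`
the component along `u` is `⟪A D u, y⟫`, of size at most `(β₀ + λ)‖y‖`, so each double step
`A D A D` shrinks norms by the factor `β₀ + 2λ`.
-/

open Finset
open scoped Classical

def IsWalk {V : Type*} (G : SimpleGraph V) {k : ℕ} (w : Fin k → V) : Prop :=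
  ∀ (m : ℕ) (h : m + 1 < k), G.Adj (w ⟨m, by omega⟩) (w ⟨m + 1, h⟩)

/-- The set `W_G(k)` of walks on `k` vertices of `G`. -/
noncomputable def walkSet {V : Type*} [Fintype V] (G : SimpleGraph V) (k : ℕ) :
    Finset (Fin k → V) :=
  Finset.univ.filter fun w => IsWalk G w

open Matrix SimpleGraph
open scoped RealInnerProductSpace

/-- The operator-theoretic content of a regular `lam`-expander: `A` is its normalized adjacency
operator and `u` the normalized all-ones vector. -/
structure IsSpectralExpander {E : Type*} [NormedAddCommGroup E] [InnerProductSpace ℝ E]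
    (A : Module.End ℝ E) (u : E) (lam : ℝ) : Prop where
  norm_unit : ‖u‖ = 1
  apply_unit : A u = u
  isSymmetric : A.IsSymmetric
  norm_apply_le : ∀ x, ‖A x‖ ≤ ‖x‖
  norm_apply_le_of_inner_eq_zero : ∀ y, ⟪u, y⟫ = 0 → ‖A y‖ ≤ lam * ‖y‖

namespace IsSpectralExpander

variable {E : Type*} [NormedAddCommGroup E] [InnerProductSpace ℝ E]
  {A D : Module.End ℝ E} {u : E} {lam β : ℝ}

theorem norm_apply_le_abs_inner_add (h : IsSpectralExpander A u lam) (hlam : 0 ≤ lam) (x : E) :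
    ‖A x‖ ≤ |⟪u, x⟫| + lam * ‖x‖ := by
  set y := x - ⟪u, x⟫ • u
  have hy : ⟪u, y⟫ = 0 := by
    simp [y, inner_sub_right, inner_smul_right, h.norm_unit]
  have hAx : A x = ⟪u, x⟫ • u + A y := by
    simp [y, map_sub, map_smul, h.apply_unit]
  have hyx : ‖y‖ ≤ ‖x‖ := by
    have hpyth := norm_add_sq_eq_norm_sq_add_norm_sq_real
      (show ⟪⟪u, x⟫ • u, y⟫ = 0 by rw [real_inner_smul_left, hy, mul_zero])
    rw [add_sub_cancel] at hpyth
    nlinarith [norm_nonneg y, norm_nonneg x, norm_nonneg (⟪u, x⟫ • u)]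
  calc ‖A x‖ ≤ ‖⟪u, x⟫ • u‖ + ‖A y‖ := hAx ▸ norm_add_le _ _
    _ ≤ |⟪u, x⟫| + lam * ‖y‖ := by
      rw [norm_smul, h.norm_unit, mul_one, Real.norm_eq_abs]
      gcongr
      exact h.norm_apply_le_of_inner_eq_zero y hy
    _ ≤ |⟪u, x⟫| + lam * ‖x‖ := by gcongr

variable (h : IsSpectralExpander A u lam) (hlam : 0 ≤ lam) (hD : D.IsSymmetric)
  (hD_norm : ∀ x, ‖D x‖ = ‖x‖) (hβ : |⟪u, D u⟫| ≤ β)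
include h hlam hD_norm hβ

theorem norm_apply_apply_unit_le : ‖A (D u)‖ ≤ β + lam := by
  calc ‖A (D u)‖ ≤ |⟪u, D u⟫| + lam * ‖D u‖ := h.norm_apply_le_abs_inner_add hlam _
    _ ≤ β + lam := by rw [hD_norm, h.norm_unit, mul_one]; gcongr

include hD in
theorem norm_apply_apply_apply_le (x : E) : ‖A (D (A x))‖ ≤ (β + 2 * lam) * ‖x‖ := by
  -- the component of `D (A x)` along `u` is `⟪A (D u), x⟫`, by symmetry of `A` and `D`
  have hcomp : |⟪u, D (A x)⟫| ≤ (β + lam) * ‖x‖ := by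
    rw [← hD, ← h.isSymmetric]
    exact (abs_real_inner_le_norm _ _).trans
      (mul_le_mul_of_nonneg_right (norm_apply_apply_unit_le h hlam hD_norm hβ) (norm_nonneg x))
  calc ‖A (D (A x))‖ ≤ |⟪u, D (A x)⟫| + lam * ‖D (A x)‖ := h.norm_apply_le_abs_inner_add hlam _
    _ ≤ (β + lam) * ‖x‖ + lam * ‖x‖ := by
      rw [hD_norm]; gcongr; exact h.norm_apply_le x
    _ = (β + 2 * lam) * ‖x‖ := by ring

include hD in
theorem norm_mul_pow_even_apply_le (j : ℕ) (x : E) :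
    ‖((A * D) ^ (2 * j)) x‖ ≤ (β + 2 * lam) ^ j * ‖x‖ := by
  induction j generalizing x with
  | zero => simp
  | succ j ih =>
    have hsq : ((A * D) ^ 2) x = A (D (A (D x))) := by simp [sq]
    have hβ0 : 0 ≤ β + 2 * lam := by linarith [(abs_nonneg _).trans hβ]
    calc ‖((A * D) ^ (2 * (j + 1))) x‖ = ‖((A * D) ^ (2 * j)) (A (D (A (D x))))‖ := by
          rw [mul_add, mul_one, pow_add, Module.End.mul_apply, hsq]
      _ ≤ (β + 2 * lam) ^ j * ((β + 2 * lam) * ‖D x‖) := by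
          grw [ih, norm_apply_apply_apply_le h hlam hD hD_norm hβ]
      _ = (β + 2 * lam) ^ (j + 1) * ‖x‖ := by rw [hD_norm]; ring

include hD in
theorem abs_inner_mul_pow_apply_le (K : ℕ) :
    |⟪D u, ((A * D) ^ K) u⟫| ≤ (β + 2 * lam) ^ ((K + 1) / 2) := by
  have hβ0 : 0 ≤ β + 2 * lam := by linarith [(abs_nonneg _).trans hβ]
  refine (abs_real_inner_le_norm _ _).trans ?_
  rw [hD_norm, h.norm_unit, one_mul]
  obtain ⟨j, rfl | rfl⟩ := Nat.even_or_odd' K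
  · rw [show (2 * j + 1) / 2 = j by omega]
    simpa [h.norm_unit] using norm_mul_pow_even_apply_le h hlam hD hD_norm hβ j u
  · rw [show (2 * j + 1 + 1) / 2 = j + 1 by omega, pow_succ, Module.End.mul_apply, pow_succ]
    calc ‖((A * D) ^ (2 * j)) (A (D u))‖ ≤ (β + 2 * lam) ^ j * (β + lam) := by
          grw [norm_mul_pow_even_apply_le h hlam hD hD_norm hβ j,
            norm_apply_apply_unit_le h hlam hD_norm hβ]
      _ ≤ (β + 2 * lam) ^ j * (β + 2 * lam) := by gcongr; linarith

end IsSpectralExpander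

theorem sum_sq_mulVec_le_of_mem_doublyStochastic {n : Type*} [Fintype n] {M : Matrix n n ℝ}
    (hM : M ∈ doublyStochastic ℝ n) (x : n → ℝ) : ∑ i, (M *ᵥ x) i ^ 2 ≤ ∑ i, x i ^ 2 := by
  calc ∑ i, (M *ᵥ x) i ^ 2 ≤ ∑ i, (M *ᵥ (x ^ 2)) i := by
        gcongr with i
        simpa [mulVec, dotProduct] using (even_two.convexOn_pow).map_sum_le
          (fun j _ => nonneg_of_mem_doublyStochastic hM) (sum_row_of_mem_doublyStochastic hM i)
          (fun j _ => Set.mem_univ (x j))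
    _ = ∑ i, x i ^ 2 := by simp [sum_mulVec_of_mem_doublyStochastic hM]

section Graph
variable {V : Type*} (G : SimpleGraph V)

noncomputable def normAdj (d : ℕ) : Matrix V V ℝ := (d : ℝ)⁻¹ • G.adjMatrix ℝ

variable {G} {d : ℕ}

theorem isHermitian_normAdj : (normAdj G d).IsHermitian :=
  (G.isHermitian_adjMatrix ℝ).smul (IsSelfAdjoint.all _)

variable [Fintype V]

theorem normAdj_mulVec_one (hd : d ≠ 0) (hreg : G.IsRegularOfDegree d) :
    normAdj G d *ᵥ 1 = 1 := by
  ext a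
  simp [normAdj, smul_mulVec, hreg a, hd]

theorem normAdj_mem_doublyStochastic (hd : d ≠ 0) (hreg : G.IsRegularOfDegree d) :
    normAdj G d ∈ doublyStochastic ℝ V := by
  refine ⟨fun a b => ?_, normAdj_mulVec_one hd hreg, ?_⟩
  · simp only [normAdj, Matrix.smul_apply, adjMatrix_apply]; positivity
  · rw [← mulVec_transpose, ← conjTranspose_eq_transpose_of_trivial, isHermitian_normAdj.eq,
      normAdj_mulVec_one hd hreg]

theorem normAdj_mulVec_apply (v : V → ℝ) (a : V) :
    (normAdj G d *ᵥ v) a = ∑ b, (if G.Adj a b then (1 : ℝ) / d else 0) * v b := by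
  simp [normAdj, mulVec, dotProduct, adjMatrix_apply, Matrix.smul_apply]

end Graph

section Euclidean
variable {V : Type*} [Fintype V]

theorem EuclideanSpace.real_norm_eq_sqrt (x : EuclideanSpace ℝ V) : ‖x‖ = √(∑ a, x a ^ 2) := by
  rw [← EuclideanSpace.real_norm_sq_eq, Real.sqrt_sq (norm_nonneg x)]

variable (V) in
noncomputable def normalizedOnes : EuclideanSpace ℝ V := (√(Fintype.card V))⁻¹ • WithLp.toLp 2 1

theorem inner_normalizedOnes_left (x : EuclideanSpace ℝ V) :
    ⟪normalizedOnes V, x⟫ = (√(Fintype.card V))⁻¹ * ∑ a, x a := by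
  simp [normalizedOnes, PiLp.inner_apply, mul_sum, mul_comm (x _)]

theorem norm_normalizedOnes [Nonempty V] : ‖normalizedOnes V‖ = 1 := by
  have : 0 < √(Fintype.card V : ℝ) := Real.sqrt_pos.2 (by exact_mod_cast Fintype.card_pos)
  simp [normalizedOnes, norm_smul, EuclideanSpace.real_norm_eq_sqrt, abs_of_pos this, this.ne']

theorem toEuclideanLin_normalizedOnes {M : Matrix V V ℝ} (hM : M *ᵥ 1 = 1) :
    toEuclideanLin M (normalizedOnes V) = normalizedOnes V := by
  simp [normalizedOnes, hM]

theorem norm_toEuclideanLin_diagonal {f : V → ℝ} (hf : ∀ a, f a ^ 2 = 1) (x : EuclideanSpace ℝ V) :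
    ‖toEuclideanLin (diagonal f) x‖ = ‖x‖ := by
  simp [EuclideanSpace.real_norm_eq_sqrt, mulVec_diagonal, mul_pow, hf]

end Euclidean

theorem isSpectralExpander_normAdj {V : Type*} [Fintype V] [Nonempty V] {G : SimpleGraph V}
    {d : ℕ} (hd : d ≠ 0) (hreg : G.IsRegularOfDegree d) {lam : ℝ}
    (hexp : ∀ v : V → ℝ, (∑ a, v a) = 0 →
      Real.sqrt (∑ a, (∑ b, (if G.Adj a b then (1 : ℝ) / (d : ℝ) else 0) * v b) ^ 2)
        ≤ lam * Real.sqrt (∑ a, v a ^ 2)) :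
    IsSpectralExpander (toEuclideanLin (normAdj G d)) (normalizedOnes V) lam where
  norm_unit := norm_normalizedOnes
  apply_unit := toEuclideanLin_normalizedOnes (normAdj_mulVec_one hd hreg)
  isSymmetric := isSymmetric_toEuclideanLin_iff.2 isHermitian_normAdj
  norm_apply_le x := by
    simp only [EuclideanSpace.real_norm_eq_sqrt]
    exact Real.sqrt_le_sqrt
      (sum_sq_mulVec_le_of_mem_doublyStochastic (normAdj_mem_doublyStochastic hd hreg) _)
  norm_apply_le_of_inner_eq_zero y hy := by
    have hsum : ∑ a, y a = 0 := by simpa [inner_normalizedOnes_left] using hy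
    simpa [EuclideanSpace.real_norm_eq_sqrt, normAdj_mulVec_apply] using hexp (fun a => y a) hsum

section Walks
variable {V : Type*} {G : SimpleGraph V}

theorem isWalk_cons_iff {k : ℕ} (a : V) (w : Fin (k + 1) → V) :
    IsWalk G (Fin.cons a w : Fin (k + 2) → V) ↔ G.Adj a (w 0) ∧ IsWalk G w := by
  have hcons (m : ℕ) (h : m + 1 < k + 2) :
      (Fin.cons a w : Fin (k + 2) → V) ⟨m + 1, h⟩ = w ⟨m, by omega⟩ :=
    Fin.cons_succ (α := fun _ => V) a w ⟨m, by omega⟩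
  refine ⟨fun h => ⟨?_, fun m hm => ?_⟩, fun ⟨h0, h⟩ m hm => ?_⟩
  · simpa [hcons] using h 0 (by omega)
  · have := h (m + 1) (by omega)
    rwa [hcons, hcons] at this
  · cases m with
    | zero => simpa [hcons] using h0
    | succ m => rw [hcons, hcons]; exact h m (by omega)

variable [Fintype V]

theorem sum_walkSet_succ {k : ℕ} (F : V → (Fin (k + 1) → V) → ℝ) :
    ∑ w ∈ walkSet G (k + 2), F (w 0) (Fin.tail w) =
      ∑ w ∈ walkSet G (k + 1), ∑ a ∈ G.neighborFinset (w 0), F a w := by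
  rw [walkSet, walkSet, sum_filter, sum_filter, ← (Fin.consEquiv fun _ => V).sum_comp,
    Fintype.sum_prod_type, sum_comm]
  simp only [Fin.consEquiv, Equiv.coe_fn_mk, isWalk_cons_iff, Fin.cons_zero, Fin.tail_cons,
    neighborFinset_eq_filter, adj_comm, sum_filter]
  refine sum_congr rfl fun w _ => ?_
  by_cases hw : IsWalk G w <;> simp [hw]

theorem walkSet_one : walkSet G 1 = univ := by
  ext w; simp [walkSet, IsWalk]

theorem sum_walkSet_mul_prod (f g : V → ℝ) (k : ℕ) :
    ∑ w ∈ walkSet G (k + 1), g (w 0) * ∏ m, f (w m) =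
      f ⬝ᵥ ((G.adjMatrix ℝ * diagonal f) ^ k *ᵥ g) := by
  induction k generalizing g with
  | zero =>
    rw [walkSet_one, pow_zero, one_mulVec, dotProduct_comm, dotProduct,
      ← (Equiv.funUnique (Fin 1) V).sum_comp]
    simp
  | succ k ih =>
    have hstep (w : Fin (k + 2) → V) :
        g (w 0) * ∏ m, f (w m) = g (w 0) * f (w 0) * ∏ m, f (Fin.tail w m) := by
      rw [Fin.prod_univ_succ, mul_assoc]; rfl
    simp_rw [hstep, sum_walkSet_succ (fun a w => g a * f a * ∏ m, f (w m)), ← sum_mul]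
    rw [pow_succ, ← mulVec_mulVec, ← ih]
    congr! with w
    simp only [← mulVec_mulVec, adjMatrix_mulVec_apply, mulVec_diagonal, mul_comm]

theorem inner_toEuclideanLin_normalizedOnes (M N : Matrix V V ℝ) :
    ⟪toEuclideanLin M (normalizedOnes V), toEuclideanLin N (normalizedOnes V)⟫ =
      (M *ᵥ 1) ⬝ᵥ (N *ᵥ 1) / Fintype.card V := by
  simp only [normalizedOnes, map_smul, toLpLin_toLp, real_inner_smul_left, real_inner_smul_right,
    toLin'_apply, EuclideanSpace.inner_toLp_toLp, star_trivial]
  rw [← mul_assoc, ← mul_inv, Real.mul_self_sqrt (Nat.cast_nonneg _), inv_mul_eq_div,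
    dotProduct_comm]

theorem sum_walkSet_prod_eq_inner [Nonempty V] {d : ℕ} (hd : d ≠ 0) (f : V → ℝ) (k : ℕ) :
    ∑ w ∈ walkSet G (k + 1), ∏ m, f (w m) =
      d ^ k * Fintype.card V * ⟪toEuclideanLin (diagonal f) (normalizedOnes V),
        ((toEuclideanLin (normAdj G d) * toEuclideanLin (diagonal f)) ^ k) (normalizedOnes V)⟫ := by
  have hadj : G.adjMatrix ℝ * diagonal f = (d : ℝ) • (normAdj G d * diagonal f) := by
    rw [normAdj, smul_mul_assoc, smul_inv_smul₀ (Nat.cast_ne_zero.2 hd)]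
  rw [Module.End.mul_eq_comp, ← toLpLin_mul_same, ← toLpLin_pow,
    inner_toEuclideanLin_normalizedOnes]
  have hsum := sum_walkSet_mul_prod (G := G) f 1 k
  simp only [Pi.one_apply, one_mul] at hsum
  have hdiag : diagonal f *ᵥ 1 = f := funext fun a => by simp [mulVec_diagonal]
  have hcard : (Fintype.card V : ℝ) ≠ 0 := Nat.cast_ne_zero.2 Fintype.card_ne_zero
  rw [hsum, hadj, smul_pow, smul_mulVec, dotProduct_smul, hdiag, smul_eq_mul]
  field_simp

theorem card_walkSet [Nonempty V] {d : ℕ} (hd : d ≠ 0) (hreg : G.IsRegularOfDegree d) (k : ℕ) :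
    (#(walkSet G (k + 1)) : ℝ) = d ^ k * Fintype.card V := by
  have hA : toEuclideanLin (normAdj G d) (normalizedOnes V) = normalizedOnes V :=
    toEuclideanLin_normalizedOnes (normAdj_mulVec_one hd hreg)
  have hsum := sum_walkSet_prod_eq_inner (G := G) hd (fun _ => 1) k
  simp only [prod_const_one, sum_const, nsmul_one, diagonal_one, toLpLin_one, LinearMap.id_apply,
    Module.End.mul_eq_comp, LinearMap.comp_id] at hsum
  rw [hsum, Module.End.pow_apply, Function.iterate_fixed hA,
    real_inner_self_eq_norm_sq, norm_normalizedOnes, one_pow, mul_one]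

end Walks

theorem neg_one_pow_val_sum {ι : Type*} (s : Finset ι) (g : ι → ZMod 2) :
    (-1 : ℝ) ^ (∑ i ∈ s, g i).val = ∏ i ∈ s, (-1 : ℝ) ^ (g i).val := by
  induction s using Finset.cons_induction with
  | empty => simp
  | cons a s ha ih =>
    rw [sum_cons, prod_cons, ← ih, ZMod.val_add, ← neg_one_pow_eq_pow_mod_two, pow_add]

/-- **Ta-Shma: expander walks are parity samplers.** Let `G` be `d`-regular with
normalized adjacency matrix of second singular value at most `λ` (i.e. `‖Av‖₂ ≤ λ‖v‖₂`
for every mean-zero `v`). Then for every `z ∈ F₂^V` with bias at most `β₀`, the parity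
along a uniformly random walk on `k` vertices has bias at most `(β₀+2λ)^⌊k/2⌋`. -/
theorem stmt_17 (V : Type) [Fintype V] [Nonempty V]
    (G : SimpleGraph V) (d : ℕ) (hd : 1 ≤ d) (hreg : G.IsRegularOfDegree d)
    (lam : ℝ) (hlam : 0 ≤ lam)
    (hexp : ∀ v : V → ℝ, (∑ a, v a) = 0 →
      Real.sqrt (∑ a, (∑ b, (if G.Adj a b then (1 : ℝ) / (d : ℝ) else 0) * v b) ^ 2)
        ≤ lam * Real.sqrt (∑ a, v a ^ 2))
    (k : ℕ) (hk : 1 ≤ k) (β₀ : ℝ)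
    (z : V → ZMod 2)
    (hbias : |(∑ a, (-1 : ℝ) ^ (z a).val) / (Fintype.card V : ℝ)| ≤ β₀) :
    |(∑ w ∈ walkSet G k, (-1 : ℝ) ^ (∑ m, z (w m)).val) / ((walkSet G k).card : ℝ)|
      ≤ (β₀ + 2 * lam) ^ (k / 2) := by
  obtain ⟨K, rfl⟩ : ∃ K, k = K + 1 := ⟨k - 1, by omega⟩
  have hd0 : d ≠ 0 := by omega
  set f : V → ℝ := fun a => (-1) ^ (z a).val
  have hf : ∀ a, f a ^ 2 = 1 := fun a => by rw [← pow_mul, mul_comm, pow_mul]; simp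
  have hD := isSymmetric_toEuclideanLin_iff.2 (isHermitian_diagonal f)
  have hinner : ⟪normalizedOnes V, toEuclideanLin (diagonal f) (normalizedOnes V)⟫ =
      (∑ a, f a) / Fintype.card V := by
    simpa [dotProduct, mulVec_diagonal] using
      inner_toEuclideanLin_normalizedOnes (1 : Matrix V V ℝ) (diagonal f)
  have hwalks : ∑ w ∈ walkSet G (K + 1), (-1 : ℝ) ^ (∑ m, z (w m)).val =
      ∑ w ∈ walkSet G (K + 1), ∏ m, f (w m) :=
    sum_congr rfl fun w _ => neg_one_pow_val_sum _ _
  have hpos : (0 : ℝ) < d ^ K * Fintype.card V := by positivity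
  rw [hwalks, sum_walkSet_prod_eq_inner hd0, card_walkSet hd0 hreg, mul_div_cancel_left₀ _ hpos.ne']
  exact (isSpectralExpander_normAdj hd0 hreg hexp).abs_inner_mul_pow_apply_le hlam hD
    (norm_toEuclideanLin_diagonal hf) (hinner ▸ hbias) K
end
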